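/- For every Hurst parameter H ∈ (0,1/2) there exist constants C > 0 and t₀ ≥ 1 such that for all t ≥ t₀: | 𝒦(t) − t^{H-3/2}/(σ_ou Γ(H−1/2)) | ≤ C · t^{H-5/2}, where Γ(H−1/2) is the value of the Gamma function at H−1/2 ∈ (−1/2,0). (Long-time behavior of the fOU moving-average kernel.) -/

import Mathlib

open MeasureTheory Real Set

/-- `σ_ou = (2 sin(πH))^{-1/2}`. -/
noncomputable def sigOU (H : ℝ) : ℝ := (2 * Real.sin (Real.pi * H)) ^ (-(1/2) : ℝ)

/-- The fOU moving-average kernel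
`𝒦(t) = (σ_ou Γ(H+1/2))⁻¹ ( t^{H-1/2} − ∫₀^t (t−u)^{H-1/2} e^{-u} du )`. -/
noncomputable def fouKernel (H : ℝ) (t : ℝ) : ℝ :=
  (sigOU H * Real.Gamma (H + 1/2))⁻¹ *
    (t ^ (H - 1/2) - ∫ u in (0 : ℝ)..t, (t - u) ^ (H - 1/2) * Real.exp (-u))

/-! With `a = H - 1/2 ∈ (-1/2, 0)`, the functional equation `Γ(a + 1) = a Γ(a)` turns the claim
into `t^a - ∫₀^t (t-u)^a e^{-u} du - a t^{a-1} = O(t^{a-2})`. Split the integral at `t/2`. On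
`[0, t/2]` replace `(t-u)^a` by its tangent line `t^a - a t^{a-1} u`: the second derivative of
`(t-u)^a` is `O(t^{a-2})` there and `∫ u² e^{-u} ≤ 2`, so the remainder contributes `O(t^{a-2})`;
since `∫₀^∞ e^{-u} = ∫₀^∞ u e^{-u} = 1`, the tangent line reproduces `t^a - a t^{a-1}` up to
terms of size `t^a e^{-t/2}`. On `[t/2, t]` the factor `e^{-u} ≤ e^{-t/2}` makes the integral
exponentially small. -/

open Filter Asymptotics

theorem abs_sub_sub_mul_le_of_hasDerivAt {f f' f'' : ℝ → ℝ} {a b M : ℝ} (hab : a ≤ b)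
    (hf : ∀ x ∈ Icc a b, HasDerivAt f (f' x) x) (hf' : ∀ x ∈ Icc a b, HasDerivAt f' (f'' x) x)
    (hM : ∀ x ∈ Icc a b, |f'' x| ≤ M) :
    |f b - f a - f' a * (b - a)| ≤ M * (b - a) ^ 2 := by
  have hM0 : 0 ≤ M := (abs_nonneg _).trans (hM a (left_mem_Icc.2 hab))
  have hslope : ∀ x ∈ Icc a b, |f' x - f' a| ≤ M * (x - a) :=
    norm_image_sub_le_of_norm_deriv_le_segment' (fun x hx => (hf' x hx).hasDerivWithinAt)
      fun x hx => hM x (Ico_subset_Icc_self hx)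
  have hF : ∀ x ∈ Icc a b,
      HasDerivWithinAt (fun y => f y - f' a * y) (f' x - f' a) (Icc a b) x := fun x hx =>
    ((hf x hx).sub ((hasDerivAt_id x).const_mul (f' a))).hasDerivWithinAt.congr_deriv (by simp)
  have hFbound : ∀ x ∈ Ico a b, ‖f' x - f' a‖ ≤ M * (b - a) := fun x hx =>
    (hslope x (Ico_subset_Icc_self hx)).trans (by gcongr; exact hx.2.le)
  calc |f b - f a - f' a * (b - a)| = ‖(f b - f' a * b) - (f a - f' a * a)‖ := by
        rw [norm_eq_abs]; ring_nf
    _ ≤ M * (b - a) * (b - a) :=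
        norm_image_sub_le_of_norm_deriv_le_segment' hF hFbound b (right_mem_Icc.2 hab)
    _ = M * (b - a) ^ 2 := by ring

theorem abs_sub_rpow_sub_rpow_add_mul_le {a t u : ℝ} (ha : a ≤ 2) (ht : 0 < t) (hu : 0 ≤ u)
    (hut : u ≤ t / 2) :
    |(t - u) ^ a - t ^ a + a * t ^ (a - 1) * u| ≤ |a * (a - 1)| * (t / 2) ^ (a - 2) * u ^ 2 := by
  have hpos : ∀ x ∈ Icc 0 u, t / 2 ≤ t - x := fun x hx => by linarith [hx.2]
  have hderiv : ∀ x ∈ Icc 0 u,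
      HasDerivAt (fun y => (t - y) ^ a) (-a * (t - x) ^ (a - 1)) x := fun x hx =>
    (((hasDerivAt_id' x).const_sub t).rpow_const (Or.inl (by linarith [hpos x hx]))).congr_deriv
      (by simp)
  have hderiv2 : ∀ x ∈ Icc 0 u,
      HasDerivAt (fun y => -a * (t - y) ^ (a - 1)) (a * (a - 1) * (t - x) ^ (a - 2)) x :=
    fun x hx => ((((hasDerivAt_id' x).const_sub t).rpow_const
      (Or.inl (by linarith [hpos x hx]))).const_mul (-a)).congr_deriv (by ring_nf)
  have hbound : ∀ x ∈ Icc 0 u,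
      |a * (a - 1) * (t - x) ^ (a - 2)| ≤ |a * (a - 1)| * (t / 2) ^ (a - 2) :=
    fun x hx => by
      rw [abs_mul, abs_of_nonneg (rpow_nonneg (by linarith [hpos x hx]) _)]
      exact mul_le_mul_of_nonneg_left
        (rpow_le_rpow_of_nonpos (by positivity) (hpos x hx) (by linarith)) (abs_nonneg _)
  have := abs_sub_sub_mul_le_of_hasDerivAt hu hderiv hderiv2 hbound
  simp only [sub_zero] at this
  convert this using 2
  ring

theorem integral_exp_neg (x : ℝ) : ∫ u in (0 : ℝ)..x, exp (-u) = 1 - exp (-x) := by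
  simp [intervalIntegral.integral_comp_neg]

theorem integral_mul_exp_neg (x : ℝ) :
    ∫ u in (0 : ℝ)..x, u * exp (-u) = 1 - (x + 1) * exp (-x) := by
  have hderiv : ∀ u ∈ uIcc 0 x,
      HasDerivAt (fun u => -((u + 1) * exp (-u))) (u * exp (-u)) u := fun u _ =>
    ((((hasDerivAt_id' u).add_const 1).mul (hasDerivAt_neg u).exp).neg).congr_deriv (by ring)
  rw [intervalIntegral.integral_eq_sub_of_hasDerivAt hderiv
    (Continuous.intervalIntegrable (by fun_prop) _ _)]
  simp only [zero_add, neg_zero, exp_zero, mul_one]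
  ring

theorem integral_sq_mul_exp_neg (x : ℝ) :
    ∫ u in (0 : ℝ)..x, u ^ 2 * exp (-u) = 2 - (x ^ 2 + 2 * x + 2) * exp (-x) := by
  have hderiv : ∀ u ∈ uIcc 0 x,
      HasDerivAt (fun u => -((u ^ 2 + 2 * u + 2) * exp (-u))) (u ^ 2 * exp (-u)) u := fun u _ =>
    (((((hasDerivAt_pow 2 u).add ((hasDerivAt_id' u).const_mul 2)).add_const 2).mul
      (hasDerivAt_neg u).exp).neg).congr_deriv (by simp only [Nat.cast_ofNat, Pi.add_apply]; ring)
  rw [intervalIntegral.integral_eq_sub_of_hasDerivAt hderiv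
    (Continuous.intervalIntegrable (by fun_prop) _ _)]
  simp only [ne_eq, OfNat.ofNat_ne_zero, not_false_eq_true, zero_pow, mul_zero, add_zero, neg_zero,
    exp_zero, mul_one]
  ring

theorem integral_sub_rpow {a : ℝ} (ha : -1 < a) (t x : ℝ) :
    ∫ u in x..t, (t - u) ^ a = (t - x) ^ (a + 1) / (a + 1) := by
  rw [intervalIntegral.integral_comp_sub_left (fun y => y ^ a), sub_self,
    integral_rpow (Or.inl ha), zero_rpow (by linarith), sub_zero]

theorem intervalIntegrable_sub_rpow {a : ℝ} (ha : -1 < a) (t : ℝ) :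
    IntervalIntegrable (fun u => (t - u) ^ a) volume 0 t := by
  simpa only [sub_self, sub_zero] using
    ((intervalIntegral.intervalIntegrable_rpow' (a := 0) (b := t) ha).comp_sub_left t).symm

theorem rpow_sub_integral_sub_mul_rpow_eq {a t : ℝ} (ha : -1 < a) (ht : 0 < t) :
    t ^ a - (∫ u in (0 : ℝ)..t, (t - u) ^ a * exp (-u)) - a * t ^ (a - 1) =
      ((1 - a / 2) * t ^ a - a * t ^ (a - 1)) * exp (-(t / 2))
        - (∫ u in (0 : ℝ)..t / 2, ((t - u) ^ a - t ^ a + a * t ^ (a - 1) * u) * exp (-u))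
        - ∫ u in t / 2..t, (t - u) ^ a * exp (-u) := by
  have hJ : IntervalIntegrable (fun u => (t - u) ^ a * exp (-u)) volume 0 t :=
    (intervalIntegrable_sub_rpow ha t).mul_continuousOn (by fun_prop)
  have hJ₁ : IntervalIntegrable (fun u => (t - u) ^ a * exp (-u)) volume 0 (t / 2) :=
    hJ.mono_set (uIcc_subset_uIcc_left (by rw [uIcc_of_le ht.le]; constructor <;> linarith))
  have hJ₂ : IntervalIntegrable (fun u => (t - u) ^ a * exp (-u)) volume (t / 2) t :=
    hJ.mono_set (uIcc_subset_uIcc_right (by rw [uIcc_of_le ht.le]; constructor <;> linarith))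
  have hremainder :
      ∫ u in (0 : ℝ)..t / 2, ((t - u) ^ a - t ^ a + a * t ^ (a - 1) * u) * exp (-u) =
        (∫ u in (0 : ℝ)..t / 2, (t - u) ^ a * exp (-u))
          - t ^ a * (∫ u in (0 : ℝ)..t / 2, exp (-u))
          + a * t ^ (a - 1) * ∫ u in (0 : ℝ)..t / 2, u * exp (-u) := by
    rw [← intervalIntegral.integral_const_mul, ← intervalIntegral.integral_const_mul,
      ← intervalIntegral.integral_sub hJ₁, ← intervalIntegral.integral_add]
    · congr 1; ext u; ring
    · exact hJ₁.sub (Continuous.intervalIntegrable (by fun_prop) _ _)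
    · exact Continuous.intervalIntegrable (by fun_prop) _ _
    · exact Continuous.intervalIntegrable (by fun_prop) _ _
  have hpow : t ^ (a - 1) * t = t ^ a := by rw [← rpow_add_one ht.ne', sub_add_cancel]
  rw [← intervalIntegral.integral_add_adjacent_intervals hJ₁ hJ₂, hremainder, integral_exp_neg,
    integral_mul_exp_neg]
  linear_combination (-(exp (-(t / 2)) * a / 2)) * hpow

theorem abs_integral_taylor_remainder_mul_exp_neg_le {a t : ℝ} (ha : a ≤ 2) (ht : 0 < t) :
    |∫ u in (0 : ℝ)..t / 2, ((t - u) ^ a - t ^ a + a * t ^ (a - 1) * u) * exp (-u)|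
      ≤ 2 * |a * (a - 1)| * (t / 2) ^ (a - 2) := by
  set M := |a * (a - 1)| * (t / 2) ^ (a - 2)
  have hM : 0 ≤ M := by positivity
  have hbound : ∀ u ∈ Ioc 0 (t / 2),
      ‖((t - u) ^ a - t ^ a + a * t ^ (a - 1) * u) * exp (-u)‖ ≤ M * (u ^ 2 * exp (-u)) :=
    fun u hu => by
      rw [norm_mul, norm_of_nonneg (exp_pos _).le, ← mul_assoc]
      exact mul_le_mul_of_nonneg_right
        (abs_sub_rpow_sub_rpow_add_mul_le ha ht hu.1.le hu.2) (exp_pos _).le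
  calc _ ≤ ∫ u in (0 : ℝ)..t / 2, M * (u ^ 2 * exp (-u)) :=
        intervalIntegral.norm_integral_le_of_norm_le (by positivity)
          (ae_of_all _ hbound) (Continuous.intervalIntegrable (by fun_prop) _ _)
    _ = M * (2 - ((t / 2) ^ 2 + 2 * (t / 2) + 2) * exp (-(t / 2))) := by
        rw [intervalIntegral.integral_const_mul, integral_sq_mul_exp_neg]
    _ ≤ 2 * M := by
        nlinarith [show 0 ≤ ((t / 2) ^ 2 + 2 * (t / 2) + 2) * exp (-(t / 2)) by positivity]
    _ = 2 * |a * (a - 1)| * (t / 2) ^ (a - 2) := by ring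

theorem abs_integral_sub_rpow_mul_exp_neg_half_le {a t : ℝ} (ha : -1 < a) (ht : 0 < t) :
    |∫ u in t / 2..t, (t - u) ^ a * exp (-u)| ≤ (a + 1)⁻¹ * (t ^ (a + 1) * exp (-(t / 2))) := by
  have hbound : ∀ u ∈ Ioc (t / 2) t, ‖(t - u) ^ a * exp (-u)‖ ≤ (t - u) ^ a * exp (-(t / 2)) :=
    fun u hu => by
      have hrpow : 0 ≤ (t - u) ^ a := rpow_nonneg (by linarith [hu.2]) a
      rw [norm_of_nonneg (by positivity)]
      exact mul_le_mul_of_nonneg_left (exp_le_exp.2 (by linarith [hu.1])) hrpow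
  have hint : IntervalIntegrable (fun u => (t - u) ^ a) volume (t / 2) t :=
    (intervalIntegrable_sub_rpow ha t).mono_set
      (uIcc_subset_uIcc_right (by rw [uIcc_of_le ht.le]; constructor <;> linarith))
  calc _ ≤ ∫ u in t / 2..t, (t - u) ^ a * exp (-(t / 2)) :=
        intervalIntegral.norm_integral_le_of_norm_le (by linarith)
          (ae_of_all _ hbound) (hint.mul_const _)
    _ = (a + 1)⁻¹ * ((t / 2) ^ (a + 1) * exp (-(t / 2))) := by
        rw [intervalIntegral.integral_mul_const, integral_sub_rpow ha]; ring_nf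
    _ ≤ (a + 1)⁻¹ * (t ^ (a + 1) * exp (-(t / 2))) := by
        refine mul_le_mul_of_nonneg_left (mul_le_mul_of_nonneg_right ?_ (exp_pos _).le)
          (inv_nonneg.2 (by linarith))
        exact rpow_le_rpow (by positivity) (by linarith) (by linarith)

theorem rpow_mul_exp_neg_mul_isBigO_rpow (s r : ℝ) {b : ℝ} (hb : 0 < b) :
    (fun t : ℝ => t ^ s * exp (-b * t)) =O[atTop] fun t => t ^ r := by
  refine ((isBigO_refl (fun t : ℝ => t ^ s) atTop).mul
    (isLittleO_exp_neg_mul_rpow_atTop hb (r - s)).isBigO).congr' EventuallyEq.rfl ?_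
  filter_upwards [eventually_gt_atTop 0] with t ht
  rw [← rpow_add ht, add_sub_cancel]

theorem div_two_rpow_isBigO_rpow (s : ℝ) :
    (fun t : ℝ => (t / 2) ^ s) =O[atTop] fun t => t ^ s := by
  refine ((isBigO_refl (fun t : ℝ => t ^ s) atTop).const_mul_left (2 ^ s)⁻¹).congr' ?_
    EventuallyEq.rfl
  filter_upwards [eventually_ge_atTop 0] with t ht
  rw [div_rpow ht zero_le_two, div_eq_inv_mul]

theorem rpow_sub_integral_sub_mul_rpow_isBigO {a : ℝ} (ha₁ : -1 < a) (ha₂ : a ≤ 2) :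
    (fun t => t ^ a - (∫ u in (0 : ℝ)..t, (t - u) ^ a * exp (-u)) - a * t ^ (a - 1))
      =O[atTop] fun t => t ^ (a - 2) := by
  have hexp (s : ℝ) : (fun t : ℝ => t ^ s * exp (-(t / 2))) =O[atTop] fun t => t ^ (a - 2) := by
    simpa only [neg_mul, one_div, inv_mul_eq_div] using
      rpow_mul_exp_neg_mul_isBigO_rpow s (a - 2) (one_half_pos (α := ℝ))
  have hmain : (fun t => ((1 - a / 2) * t ^ a - a * t ^ (a - 1)) * exp (-(t / 2)))
      =O[atTop] fun t => t ^ (a - 2) :=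
    (((hexp a).const_mul_left (1 - a / 2)).sub ((hexp (a - 1)).const_mul_left a)).congr_left
      fun t => by ring
  have hremainder : (fun t => ∫ u in (0 : ℝ)..t / 2,
      ((t - u) ^ a - t ^ a + a * t ^ (a - 1) * u) * exp (-u)) =O[atTop] fun t => t ^ (a - 2) := by
    refine (IsBigO.of_bound (2 * |a * (a - 1)|) ?_).trans (div_two_rpow_isBigO_rpow (a - 2))
    filter_upwards [eventually_gt_atTop 0] with t ht
    rw [norm_eq_abs, norm_of_nonneg (rpow_nonneg (by positivity) _)]
    exact abs_integral_taylor_remainder_mul_exp_neg_le ha₂ ht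
  have htail : (fun t => ∫ u in t / 2..t, (t - u) ^ a * exp (-u))
      =O[atTop] fun t => t ^ (a - 2) := by
    refine (IsBigO.of_bound (a + 1)⁻¹ ?_).trans (hexp (a + 1))
    filter_upwards [eventually_gt_atTop 0] with t ht
    rw [norm_eq_abs, norm_of_nonneg (by positivity)]
    exact abs_integral_sub_rpow_mul_exp_neg_half_le ha₁ ht
  refine ((hmain.sub hremainder).sub htail).congr' ?_ EventuallyEq.rfl
  filter_upwards [eventually_gt_atTop 0] with t ht
  exact (rpow_sub_integral_sub_mul_rpow_eq ha₁ ht).symm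

theorem exists_pos_forall_abs_le_of_isBigO_rpow {f : ℝ → ℝ} {r : ℝ}
    (h : f =O[atTop] fun t => t ^ r) : ∃ C > 0, ∃ t₀ ≥ (1 : ℝ), ∀ t ≥ t₀, |f t| ≤ C * t ^ r := by
  obtain ⟨C, hC, hCf⟩ := h.exists_pos
  obtain ⟨t₀, ht₀⟩ := eventually_atTop.1 hCf.bound
  refine ⟨C, hC, max t₀ 1, le_max_right _ _, fun t ht => ?_⟩
  have := ht₀ t (le_of_max_le_left ht)
  rwa [norm_eq_abs, norm_eq_abs, abs_of_nonneg (rpow_nonneg (by linarith [le_max_right t₀ 1]) _)]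
    at this

/-- Long-time behavior of the fOU moving-average kernel: for every `H ∈ (0,1/2)`
there exist `C > 0` and `t₀ ≥ 1` such that for all `t ≥ t₀`,
`| 𝒦(t) − t^{H-3/2}/(σ_ou Γ(H−1/2)) | ≤ C t^{H-5/2}`,
with `Γ(H−1/2)` the Gamma function at `H−1/2 ∈ (−1/2,0)`. -/
theorem fouKernel_longTime (H : ℝ) (hH : H ∈ Set.Ioo (0 : ℝ) (1/2)) :
    ∃ C > (0 : ℝ), ∃ t₀ ≥ (1 : ℝ), ∀ t ≥ t₀,
      |fouKernel H t - t ^ (H - 3/2) / (sigOU H * Real.Gamma (H - 1/2))|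
        ≤ C * t ^ (H - 5/2) := by
  obtain ⟨hH₀, hH₁⟩ := hH
  have hne : H - 1/2 ≠ 0 := by linarith
  have hΓ : Real.Gamma (H + 1/2) = (H - 1/2) * Real.Gamma (H - 1/2) := by
    rw [← Real.Gamma_add_one hne]; ring_nf
  have hkernel : ∀ t, fouKernel H t - t ^ (H - 3/2) / (sigOU H * Real.Gamma (H - 1/2)) =
      (sigOU H * Real.Gamma (H + 1/2))⁻¹ * (t ^ (H - 1/2)
        - (∫ u in (0 : ℝ)..t, (t - u) ^ (H - 1/2) * exp (-u))
        - (H - 1/2) * t ^ (H - 1/2 - 1)) := by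
    intro t
    rw [fouKernel, hΓ, mul_left_comm, mul_inv, show H - 1/2 - 1 = H - 3/2 by ring]
    linear_combination
      (sigOU H * Real.Gamma (H - 1/2))⁻¹ * t ^ (H - 3/2) * inv_mul_cancel₀ hne
  have hasymp := (rpow_sub_integral_sub_mul_rpow_isBigO (a := H - 1/2) (by linarith)
    (by linarith)).const_mul_left (sigOU H * Real.Gamma (H + 1/2))⁻¹
  rw [show H - 1/2 - 2 = H - 5/2 by ring] at hasymp
  simp only [← hkernel] at hasymp
  exact exists_pos_forall_abs_le_of_isBigO_rpow hasymp
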